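/- arXiv:2502.07585 — 3 statements merged into one kernel-verified Lean document; each statement's English description precedes it below -/
import Mathlib

section
/- Consider a game with agents N and action sets A_i, with all utilities i.i.d. with continuous CDF F. For a fixed action profile a, the probability that a is a pure ε*-equilibrium (a pure ε-equilibrium in which all agents except at most one play a best response) equals (1/∏_{i∈N}|A_i|) · (1 + ∑_{i∈N} |A_i| p_i(ε)), where p_i(ε) = ∫ (F(x+ε)^{|A_i|−1} − F(x)^{|A_i|−1}) dF(x). -/
open MeasureTheory

/-- `p_i(ε) = ∫ (F(x+ε)^(|A_i|−1) − F(x)^(|A_i|−1)) dF(x)` where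
`F x = μ (Iic x)`. -/
noncomputable def pEps (μ : Measure ℝ) (ε : ℝ) (card : ℕ) : ℝ :=
  ∫ x, (((μ (Set.Iic (x + ε))).toReal) ^ (card - 1)
      - ((μ (Set.Iic x)).toReal) ^ (card - 1)) ∂μ

/-!
Conditioning on the utility `t` that agent `i` gets at `a`, the other `|A_i| - 1` deviations are
independent, so `a_i` is a `δ`-best response with probability `∫ F(t + δ)^(|A_i| - 1) dF(t)`.
For `δ = 0` this is `1/|A_i|`: each of `m + 1` i.i.d. values is the maximum with the same
probability, and ties are null because `F` is continuous. The event splits disjointly into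
"every agent best-responds" and, for each `i`, "only `i` fails to, but by at most `ε`"; agents
are independent, so its probability is `∏ 1/|A_j| + ∑_i p_i(ε) ∏_{j ≠ i} 1/|A_j|`.
-/

open Set
open scoped ENNReal

section Conditioning

variable {ι α : Type*} [Fintype ι] [DecidableEq ι] [MeasurableSpace α] (μ : Measure α)

theorem measurePreserving_eval_prod_restrict_ne [SigmaFinite μ] (k₀ : ι) :
    MeasurePreserving (fun f : ι → α => (f k₀, fun k : {k // k ≠ k₀} => f k))
      (Measure.pi fun _ => μ) (μ.prod (Measure.pi fun _ : {k // k ≠ k₀} => μ)) := by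
  have hsplit := measurePreserving_piEquivPiSubtypeProd (fun _ : ι => μ) (· = k₀)
  -- `Measure.pi` depends on the `Fintype` instance of its index type.
  rw [Subsingleton.elim (Subtype.fintype _) (Fintype.subtypeEq k₀)] at hsplit
  exact ((measurePreserving_funUnique μ _).prod (MeasurePreserving.id _)).comp hsplit

variable [IsProbabilityMeasure μ]

theorem measure_pi_forall_mem_of_notMem {k₀ : ι} {S : Finset ι} (hk₀ : k₀ ∉ S)
    {s : α → Set α} (hs : MeasurableSet {p : α × α | p.2 ∈ s p.1}) :
    Measure.pi (fun _ : ι => μ) {f | ∀ k ∈ S, f k ∈ s (f k₀)} = ∫⁻ t, μ (s t) ^ S.card ∂μ := by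
  set E : Set (α × ({k // k ≠ k₀} → α)) := {p | ∀ k : {k // k ≠ k₀}, ↑k ∈ S → p.2 k ∈ s p.1}
  have hE : MeasurableSet E := by
    simp only [E, ofPred_forall]
    exact .iInter fun k => .iInter fun _ =>
      hs.preimage (measurable_fst.prodMk (measurable_pi_apply k |>.comp measurable_snd))
  have hsection (t : α) :
      Prod.mk t ⁻¹' E = Set.pi univ fun k : {k // k ≠ k₀} => if ↑k ∈ S then s t else univ := by
    ext g
    simp only [E, mem_preimage, mem_ofPred_eq, Set.mem_pi, mem_univ, true_implies]
    refine forall_congr' fun k => ?_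
    split_ifs <;> simp [*]
  have hcard : (Finset.univ.filter fun k : {k // k ≠ k₀} => ↑k ∈ S).card = S.card := by
    have : (Finset.univ.filter fun k : {k // k ≠ k₀} => ↑k ∈ S) = S.subtype (· ≠ k₀) := by
      ext; simp
    rw [this, Finset.card_subtype,
      Finset.filter_true_of_mem fun k hk => ne_of_mem_of_not_mem hk hk₀]
  have hpre : {f : ι → α | ∀ k ∈ S, f k ∈ s (f k₀)}
      = (fun f : ι → α => (f k₀, fun k : {k // k ≠ k₀} => f k)) ⁻¹' E := by
    ext f
    simp only [E, mem_preimage, mem_ofPred_eq, Subtype.forall]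
    exact ⟨fun h k _ hk => h k hk, fun h k hk => h k (fun e => hk₀ (e ▸ hk)) hk⟩
  rw [hpre, (measurePreserving_eval_prod_restrict_ne μ k₀).measure_preimage hE.nullMeasurableSet,
    Measure.prod_apply hE]
  refine lintegral_congr fun t => ?_
  rw [hsection, Measure.pi_pi]
  simp only [apply_ite μ, measure_univ, Finset.prod_ite, Finset.prod_const_one, mul_one,
    Finset.prod_const, hcard]

theorem measure_pi_apply_eq_apply_eq_zero [MeasurableEq α] [NullSingletonClass μ] {k₀ k₁ : ι}
    (h : k₁ ≠ k₀) :
    Measure.pi (fun _ : ι => μ) {f | f k₁ = f k₀} = 0 := by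
  have := measure_pi_forall_mem_of_notMem μ (S := {k₁}) (Finset.notMem_singleton.mpr h.symm)
    (s := fun t => {t}) (measurableSet_diagonal.preimage measurable_swap)
  simpa using this

end Conditioning

section CDF

variable {ι : Type*} [Fintype ι] [DecidableEq ι] (μ : Measure ℝ) [IsProbabilityMeasure μ]

theorem measure_pi_forall_le_add {S : Finset ι} {k₀ : ι} (hk₀ : k₀ ∈ S) {δ : ℝ} (hδ : 0 ≤ δ) :
    Measure.pi (fun _ : ι => μ) {f | ∀ k ∈ S, f k ≤ f k₀ + δ}
      = ∫⁻ t, μ (Iic (t + δ)) ^ (S.card - 1) ∂μ := by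
  have hset : {f : ι → ℝ | ∀ k ∈ S, f k ≤ f k₀ + δ}
      = {f | ∀ k ∈ S.erase k₀, f k ∈ Iic (f k₀ + δ)} := by
    ext f
    simp only [mem_ofPred_eq, mem_Iic, Finset.mem_erase]
    refine ⟨fun h k hk => h k hk.2, fun h k hk => ?_⟩
    rcases eq_or_ne k k₀ with rfl | hne
    · exact le_add_of_nonneg_right hδ
    · exact h k ⟨hne, hk⟩
  rw [hset, measure_pi_forall_mem_of_notMem μ (S.notMem_erase k₀) (s := fun t => Iic (t + δ))
      (measurableSet_le measurable_snd (measurable_fst.add_const δ)), Finset.card_erase_of_mem hk₀]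

theorem lintegral_measure_Iic_pow [NullSingletonClass μ] (m : ℕ) :
    ∫⁻ t, μ (Iic t) ^ m ∂μ = ((m : ℝ≥0∞) + 1)⁻¹ := by
  set P := Measure.pi fun _ : Fin (m + 1) => μ
  set E : Fin (m + 1) → Set (Fin (m + 1) → ℝ) := fun k => {f | ∀ j, f j ≤ f k}
  have hE (k : Fin (m + 1)) : P (E k) = ∫⁻ t, μ (Iic t) ^ m ∂μ := by
    simpa [E] using measure_pi_forall_le_add μ (Finset.mem_univ k) le_rfl
  have hEmeas (k : Fin (m + 1)) : MeasurableSet (E k) := by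
    simp only [E, ofPred_forall]
    exact .iInter fun j => measurableSet_le (measurable_pi_apply j) (measurable_pi_apply k)
  have hcover : ⋃ k, E k = univ := by
    refine eq_univ_of_forall fun f => mem_iUnion.mpr ?_
    obtain ⟨k, -, hk⟩ := Finset.exists_max_image Finset.univ f Finset.univ_nonempty
    exact ⟨k, fun j => hk j (Finset.mem_univ j)⟩
  have hties : Pairwise (Function.onFun (AEDisjoint P) E) := by
    intro k k' hkk'
    refine measure_mono_null (fun f hf => ?_) (measure_pi_apply_eq_apply_eq_zero μ hkk'.symm)
    exact le_antisymm (hf.1 k') (hf.2 k)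
  have hsum : ((m : ℝ≥0∞) + 1) * ∫⁻ t, μ (Iic t) ^ m ∂μ = 1 := by
    have hunion : P (⋃ k, E k) = 1 := by rw [hcover, measure_univ]
    rw [measure_iUnion₀ hties fun k => (hEmeas k).nullMeasurableSet, tsum_fintype] at hunion
    simpa [hE] using hunion
  exact ENNReal.eq_inv_of_mul_eq_one_left (by rwa [mul_comm])

end CDF

section PEps

variable (μ : Measure ℝ)

theorem measurable_measure_Iic : Measurable fun t => μ (Iic t) :=
  Monotone.measurable fun _ _ h => measure_mono (Iic_subset_Iic.mpr h)

variable [IsProbabilityMeasure μ]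

theorem integral_toReal_measure_Iic_pow {g : ℝ → ℝ} (hg : Measurable g) (n : ℕ) :
    ∫ x, (μ (Iic (g x))).toReal ^ n ∂μ = (∫⁻ x, μ (Iic (g x)) ^ n ∂μ).toReal := by
  have hm : Measurable fun x => μ (Iic (g x)) ^ n :=
    ((measurable_measure_Iic μ).comp hg).pow_const n
  rw [← integral_toReal hm.aemeasurable (ae_of_all _ fun _ => by finiteness)]
  simp only [ENNReal.toReal_pow]

theorem integrable_toReal_measure_Iic_pow {g : ℝ → ℝ} (hg : Measurable g) (n : ℕ) :
    Integrable (fun x => (μ (Iic (g x))).toReal ^ n) μ := by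
  refine .of_bound ?_ 1 (ae_of_all _ fun x => ?_)
  · exact ((measurable_measure_Iic μ).comp hg).ennreal_toReal.pow_const n |>.aestronglyMeasurable
  · rw [Real.norm_of_nonneg (by positivity)]
    exact pow_le_one₀ ENNReal.toReal_nonneg measureReal_le_one

theorem pEps_eq_toReal_sub (ε : ℝ) (n : ℕ) :
    pEps μ ε n = (∫⁻ x, μ (Iic (x + ε)) ^ (n - 1) ∂μ).toReal
      - (∫⁻ x, μ (Iic x) ^ (n - 1) ∂μ).toReal := by
  rw [pEps, integral_sub (integrable_toReal_measure_Iic_pow μ (measurable_add_const ε) _)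
    (integrable_toReal_measure_Iic_pow μ (g := fun x => x) measurable_id _),
    integral_toReal_measure_Iic_pow μ (measurable_add_const ε),
    integral_toReal_measure_Iic_pow μ (g := fun x => x) measurable_id]

end PEps

section ProductMeasure

variable {ι : Type*} [DecidableEq ι] {α : ι → Type*}

theorem mem_univ_pi_update_iff {B : ∀ i, Set (α i)} {i : ι} {D : Set (α i)} {u : ∀ i, α i} :
    u ∈ Set.pi univ (Function.update B i D) ↔ u i ∈ D ∧ ∀ j ≠ i, u j ∈ B j := by
  rw [mem_univ_pi]
  exact Function.forall_update_iff B (p := fun j s => u j ∈ s)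

theorem setOf_exists_forall_ne_eq_union [Nonempty ι] {B C : ∀ i, Set (α i)}
    (hBC : ∀ i, B i ⊆ C i) :
    {u : ∀ i, α i | ∃ i, u i ∈ C i ∧ ∀ j ≠ i, u j ∈ B j}
      = Set.pi univ B ∪ ⋃ i, Set.pi univ (Function.update B i (C i \ B i)) := by
  ext u
  simp only [mem_ofPred_eq, mem_union, mem_iUnion, mem_univ_pi_update_iff, mem_sdiff]
  rw [mem_univ_pi]
  constructor
  · rintro ⟨i, hCi, hB⟩
    by_cases hBi : u i ∈ B i
    · exact .inl fun j => by rcases eq_or_ne j i with rfl | hj <;> [exact hBi; exact hB j hj]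
    · exact .inr ⟨i, ⟨hCi, hBi⟩, hB⟩
  · rintro (hB | ⟨i, ⟨hCi, -⟩, hB⟩)
    · exact ⟨Classical.arbitrary ι, hBC _ (hB _), fun j _ => hB j⟩
    · exact ⟨i, hCi, hB⟩

variable [Fintype ι] [∀ i, MeasurableSpace (α i)] (ν : ∀ i, Measure (α i))
  [∀ i, IsFiniteMeasure (ν i)]

theorem measureReal_pi_setOf_exists_forall_ne [Nonempty ι] {B C : ∀ i, Set (α i)}
    (hB : ∀ i, MeasurableSet (B i)) (hC : ∀ i, MeasurableSet (C i)) (hBC : ∀ i, B i ⊆ C i) :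
    (Measure.pi ν).real {u | ∃ i, u i ∈ C i ∧ ∀ j ≠ i, u j ∈ B j}
      = ∏ j, (ν j).real (B j)
        + ∑ i, ((ν i).real (C i) - (ν i).real (B i))
            * ∏ j ∈ Finset.univ.erase i, (ν j).real (B j) := by
  set U : ι → Set (∀ i, α i) := fun i => Set.pi univ (Function.update B i (C i \ B i))
  have hU (i : ι) : MeasurableSet (U i) := .univ_pi fun j => by
    rcases eq_or_ne j i with rfl | hj
    · simpa using (hC j).diff (hB j)
    · simpa [hj] using hB j
  have hdisj : Disjoint (Set.pi univ B) (⋃ i, U i) := by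
    refine Set.disjoint_left.mpr fun u hu hu' => ?_
    obtain ⟨i, hi⟩ := mem_iUnion.mp hu'
    exact (mem_univ_pi_update_iff.mp hi).1.2 (hu i (mem_univ i))
  have hUdisj : Pairwise (Function.onFun Disjoint U) := fun i j hij =>
    Set.disjoint_left.mpr fun u hi hj =>
      (mem_univ_pi_update_iff.mp hj).1.2 ((mem_univ_pi_update_iff.mp hi).2 j hij.symm)
  have hUreal (i : ι) : (Measure.pi ν).real (U i)
      = ((ν i).real (C i) - (ν i).real (B i)) * ∏ j ∈ Finset.univ.erase i, (ν j).real (B j) := by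
    have hmeasure :
        Measure.pi ν (U i) = ν i (C i \ B i) * ∏ j ∈ Finset.univ.erase i, ν j (B j) := by
      rw [Measure.pi_pi, Finset.prod_congr rfl fun j _ =>
          Function.apply_update (fun j => ν j) B i (C i \ B i) j,
        Finset.prod_update_of_mem (Finset.mem_univ i), Finset.sdiff_singleton_eq_erase]
    rw [measureReal_def, hmeasure, ENNReal.toReal_mul, ENNReal.toReal_prod, ← measureReal_def,
      measureReal_sdiff (hBC i) (hB i)]
    rfl
  rw [setOf_exists_forall_ne_eq_union hBC, measureReal_union hdisj (.iUnion hU),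
    measureReal_iUnion_fintype hUdisj hU]
  simp only [hUreal, measureReal_def, Measure.pi_pi, ENNReal.toReal_prod]

end ProductMeasure

theorem Finset.prod_inv_add_sum_mul_prod_erase_inv {ι : Type*} [Fintype ι] [DecidableEq ι]
    {n p : ι → ℝ} (hn : ∀ i, n i ≠ 0) :
    ∏ j, (n j)⁻¹ + ∑ i, p i * ∏ j ∈ Finset.univ.erase i, (n j)⁻¹
      = (1 / ∏ j, n j) * (1 + ∑ i, n i * p i) := by
  have herase (i : ι) : ∏ j ∈ Finset.univ.erase i, (n j)⁻¹ = n i * ∏ j, (n j)⁻¹ := by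
    rw [← Finset.mul_prod_erase Finset.univ (fun j => (n j)⁻¹) (Finset.mem_univ i), ← mul_assoc,
      mul_inv_cancel₀ (hn i), one_mul]
  simp only [herase, one_div, ← Finset.prod_inv_distrib, mul_add, mul_one, Finset.mul_sum]
  congr 1
  exact Finset.sum_congr rfl fun i _ => by ring

section Game

variable {N : Type*} [DecidableEq N] {A : N → Type*}

def bestResponseWithin (a : ∀ i, A i) (i : N) (δ : ℝ) : Set ((∀ j, A j) → ℝ) :=
  {v | ∀ x : A i, v (Function.update a i x) ≤ v a + δ}

theorem measurableSet_bestResponseWithin (a : ∀ i, A i) (i : N) [Countable (A i)] (δ : ℝ) :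
    MeasurableSet (bestResponseWithin a i δ) := by
  simp only [bestResponseWithin, ofPred_forall]
  exact .iInter fun x => measurableSet_le (by fun_prop) (by fun_prop)

theorem bestResponseWithin_mono (a : ∀ i, A i) (i : N) {δ δ' : ℝ} (h : δ ≤ δ') :
    bestResponseWithin a i δ ⊆ bestResponseWithin a i δ' :=
  fun _ hv x => (hv x).trans (by gcongr)

variable [Fintype N] [∀ i, Fintype (A i)] (μ : Measure ℝ) [IsProbabilityMeasure μ]

theorem measure_bestResponseWithin (a : ∀ i, A i) (i : N) {δ : ℝ} (hδ : 0 ≤ δ) :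
    Measure.pi (fun _ : ∀ j, A j => μ) (bestResponseWithin a i δ)
      = ∫⁻ t, μ (Iic (t + δ)) ^ (Fintype.card (A i) - 1) ∂μ := by
  classical
  set S := Finset.univ.image (Function.update a i)
  have hset : bestResponseWithin a i δ = {f | ∀ y ∈ S, f y ≤ f a + δ} := by
    ext f
    simp [bestResponseWithin, S]
  have ha : a ∈ S := Finset.mem_image.mpr ⟨a i, Finset.mem_univ _, Function.update_eq_self i a⟩
  rw [hset, measure_pi_forall_le_add μ ha hδ,
    Finset.card_image_of_injective _ (Function.update_injective a i), Finset.card_univ]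

theorem measureReal_bestResponseWithin_zero [NullSingletonClass μ] (a : ∀ i, A i) (i : N) :
    (Measure.pi fun _ : ∀ j, A j => μ).real (bestResponseWithin a i 0)
      = (Fintype.card (A i) : ℝ)⁻¹ := by
  have hcard : ((Fintype.card (A i) - 1 : ℕ) : ℝ≥0∞) + 1 = Fintype.card (A i) := by
    have : 0 < Fintype.card (A i) := Fintype.card_pos_iff.mpr ⟨a i⟩
    exact_mod_cast Nat.sub_add_cancel this
  simp only [measureReal_def, measure_bestResponseWithin μ a i le_rfl, add_zero,
    lintegral_measure_Iic_pow, hcard, ENNReal.toReal_inv, ENNReal.toReal_natCast]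

theorem pEps_card_eq_measureReal_sub (a : ∀ i, A i) {ε : ℝ} (hε : 0 ≤ ε) (i : N) :
    pEps μ ε (Fintype.card (A i))
      = (Measure.pi fun _ : ∀ j, A j => μ).real (bestResponseWithin a i ε)
        - (Measure.pi fun _ : ∀ j, A j => μ).real (bestResponseWithin a i 0) := by
  rw [pEps_eq_toReal_sub, measureReal_def, measureReal_def, measure_bestResponseWithin μ a i hε,
    measure_bestResponseWithin μ a i le_rfl]
  simp only [add_zero]

end Game

theorem stmt_6_general (μ : Measure ℝ) [IsProbabilityMeasure μ] [NullSingletonClass μ]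
    (ε : ℝ) (hε : 0 ≤ ε)
    (N : Type) [Fintype N] [DecidableEq N] [Nonempty N]
    (A : N → Type) [∀ i, Fintype (A i)]
    (a : ∀ i, A i) :
    ((Measure.pi (fun _ : N => Measure.pi (fun _ : ∀ j, A j => μ)))
      {u : N → (∀ j, A j) → ℝ |
        ∃ i : N, (∀ x : A i, u i (Function.update a i x) ≤ u i a + ε) ∧
          ∀ j : N, j ≠ i → ∀ x : A j, u j (Function.update a j x) ≤ u j a}).toReal
      = (1 / ∏ i : N, (Fintype.card (A i) : ℝ)) *
        (1 + ∑ i : N, (Fintype.card (A i) : ℝ) * pEps μ ε (Fintype.card (A i))) := by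
  have hevent : {u : N → (∀ j, A j) → ℝ |
        ∃ i : N, (∀ x : A i, u i (Function.update a i x) ≤ u i a + ε) ∧
          ∀ j : N, j ≠ i → ∀ x : A j, u j (Function.update a j x) ≤ u j a}
      = {u | ∃ i, u i ∈ bestResponseWithin a i ε ∧ ∀ j ≠ i, u j ∈ bestResponseWithin a j 0} := by
    simp only [bestResponseWithin, mem_ofPred_eq, add_zero]
  have hcard (i : N) : (Fintype.card (A i) : ℝ) ≠ 0 :=
    Nat.cast_ne_zero.mpr (Fintype.card_pos_iff.mpr ⟨a i⟩).ne'
  rw [← measureReal_def, hevent, measureReal_pi_setOf_exists_forall_ne _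
    (fun i => measurableSet_bestResponseWithin a i 0)
    (fun i => measurableSet_bestResponseWithin a i ε)
    (fun i => bestResponseWithin_mono a i hε)]
  simp only [← pEps_card_eq_measureReal_sub μ a hε]
  simp only [measureReal_bestResponseWithin_zero]
  exact Finset.prod_inv_add_sum_mul_prod_erase_inv hcard

/-- With all utilities i.i.d. with continuous CDF, a fixed action profile `a`
is a pure ε*-equilibrium (a pure ε-equilibrium in which all agents except at
most one best-respond) with probability
`(1/∏_i |A_i|) · (1 + ∑_i |A_i| p_i(ε))`. -/
theorem stmt_6 (μ : Measure ℝ) [IsProbabilityMeasure μ] [NullSingletonClass μ]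
    (ε : ℝ) (hε : 0 ≤ ε)
    (N : Type) [Fintype N] [DecidableEq N] [Nonempty N]
    (A : N → Type) [∀ i, Fintype (A i)] (hA : ∀ i, 2 ≤ Fintype.card (A i))
    (a : ∀ i, A i) :
    ((Measure.pi (fun _ : N => Measure.pi (fun _ : ∀ j, A j => μ)))
      {u : N → (∀ j, A j) → ℝ |
        ∃ i : N, (∀ x : A i, u i (Function.update a i x) ≤ u i a + ε) ∧
          ∀ j : N, j ≠ i → ∀ x : A j, u j (Function.update a j x) ≤ u j a}).toReal
      = (1 / ∏ i : N, (Fintype.card (A i) : ℝ)) *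
        (1 + ∑ i : N, (Fintype.card (A i) : ℝ) * pEps μ ε (Fintype.card (A i))) :=
  stmt_6_general μ ε hε N A a
end

section
/- Consider a game with agents N and action sets A_i, with all utilities i.i.d. with continuous CDF F. Then the expected number of pure ε-equilibria equals ∏_{i∈N} |A_i| q_i(ε), where q_i(ε) = ∫ F(x+ε)^{|A_i|−1} dF(x). -/
/-!
A profile `a` is a pure ε-equilibrium iff, for every player `i`, `u i a' ≤ u i a + ε` for each of
the `|A_i| - 1` unilateral deviations `a'` of `i` from `a`. These events involve disjoint blocks
of independent utilities, so their probabilities multiply.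
Conditioning on `u i a = t`, the `|A_i| - 1` deviation utilities are i.i.d. and each is at most
`t + ε` with probability `F (t + ε)`, so the `i`-th event has probability `q_i(ε)`. Linearity of
expectation over the `∏ i, |A_i|` profiles gives the formula.
-/

open MeasureTheory
open scoped Classical

/-- `q_i(ε) = ∫ F(x+ε)^(|A_i|−1) dF(x)` where `F x = μ (Iic x)`. -/
noncomputable def qEps (μ : Measure ℝ) (ε : ℝ) (card : ℕ) : ℝ :=
  ∫ x, ((μ (Set.Iic (x + ε))).toReal) ^ (card - 1) ∂μ

lemma measure_pi_setOf_forall_mem {α κ : Type*} [MeasurableSpace α] (μ : Measure α)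
    [IsProbabilityMeasure μ] [Fintype κ] (t : Finset κ) (S : Set α) :
    Measure.pi (fun _ : κ => μ) {w | ∀ p ∈ t, w p ∈ S} = μ S ^ t.card := by
  have hset : {w : κ → α | ∀ p ∈ t, w p ∈ S} = (t : Set κ).pi fun _ => S := rfl
  rw [hset, ← Set.pi_univ_ite, Measure.pi_pi]
  simp [apply_ite μ]

lemma measurable_measure_Iic_add_pow (μ : Measure ℝ) (ε : ℝ) (k : ℕ) :
    Measurable fun t : ℝ => μ (Set.Iic (t + ε)) ^ k := by
  have hmono : Monotone fun t : ℝ => μ (Set.Iic (t + ε)) := fun _ _ hxy =>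
    measure_mono (Set.Iic_subset_Iic.2 (by linarith))
  exact hmono.measurable.pow_const k

lemma measure_pi_setOf_forall_le_add {ι : Type*} [Fintype ι] (μ : Measure ℝ)
    [IsProbabilityMeasure μ] (ε : ℝ) (b : ι) (s : Finset ι) (hb : b ∉ s) :
    Measure.pi (fun _ : ι => μ) {v | ∀ p ∈ s, v p ≤ v b + ε}
      = ∫⁻ t, μ (Set.Iic (t + ε)) ^ s.card ∂μ := by
  -- split off the coordinate `b` and integrate over it last
  let e := MeasurableEquiv.piEquivPiSubtypeProd (fun _ : ι => ℝ) (· = b)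
  let T : Set (({p // p = b} → ℝ) × ({p // p ≠ b} → ℝ)) :=
    {w | ∀ p ∈ s.subtype (· ≠ b), w.2 p ∈ Set.Iic (w.1 ⟨b, rfl⟩ + ε)}
  have hT : MeasurableSet T := by
    have : T = ⋂ p ∈ s.subtype (· ≠ b), {w | w.2 p ≤ w.1 ⟨b, rfl⟩ + ε} := by
      ext; simp [T]
    rw [this]
    exact .biInter (Set.to_countable _) fun p _ => measurableSet_le (by fun_prop) (by fun_prop)
  have hpre : e ⁻¹' T = {v | ∀ p ∈ s, v p ≤ v b + ε} := by
    ext v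
    simp only [T, e, Set.mem_preimage, Set.mem_ofPred_eq, Finset.mem_subtype, Set.mem_Iic,
      MeasurableEquiv.piEquivPiSubtypeProd, MeasurableEquiv.coe_mk, Equiv.piEquivPiSubtypeProd]
    exact ⟨fun h p hp => h ⟨p, fun h => hb (h ▸ hp)⟩ hp, fun h p hp => h p hp⟩
  have hcard : (s.subtype (· ≠ b)).card = s.card := by
    rw [Finset.card_subtype, Finset.filter_true_of_mem]
    rintro p hp rfl
    exact hb hp
  rw [← hpre, (measurePreserving_piEquivPiSubtypeProd _ _).measure_preimage hT.nullMeasurableSet,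
    Measure.prod_apply hT]
  simp only [T, Set.preimage_ofPred_eq, measure_pi_setOf_forall_mem, hcard]
  convert (measurePreserving_funUnique μ {p // p = b}).lintegral_comp
    (measurable_measure_Iic_add_pow μ ε s.card)
  rfl

lemma toReal_lintegral_measure_Iic_add_pow (μ : Measure ℝ) [IsProbabilityMeasure μ] (ε : ℝ)
    (n : ℕ) : (∫⁻ t, μ (Set.Iic (t + ε)) ^ (n - 1) ∂μ).toReal = qEps μ ε n := by
  rw [qEps, ← integral_toReal (measurable_measure_Iic_add_pow μ ε _).aemeasurable
    (ae_of_all _ fun t => (pow_le_one' prob_le_one _).trans_lt ENNReal.one_lt_top)]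
  simp [ENNReal.toReal_pow]

lemma ite_one_zero_eq_indicator {α : Type*} {P : α → Prop} [DecidablePred P] :
    (fun x => if P x then (1 : ℝ) else 0) = {x | P x}.indicator 1 := by
  ext x
  simp [Set.indicator_apply]

section PureEquilibrium

variable {N : Type*} [DecidableEq N] {A : N → Type*}

noncomputable def unilateralDeviations [∀ i, Fintype (A i)] (a : ∀ j, A j) (i : N) :
    Finset (∀ j, A j) :=
  (Finset.univ.image (Function.update a i)).erase a

lemma card_unilateralDeviations [∀ i, Fintype (A i)] (a : ∀ j, A j) (i : N) :
    (unilateralDeviations a i).card = Fintype.card (A i) - 1 := by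
  rw [unilateralDeviations, Finset.card_erase_of_mem,
    Finset.card_image_of_injective _ (Function.update_injective a i), Finset.card_univ]
  exact Finset.mem_image.2 ⟨a i, Finset.mem_univ _, Function.update_eq_self i a⟩

lemma forall_update_le_add_iff [∀ i, Fintype (A i)] {ε : ℝ} (hε : 0 ≤ ε) (a : ∀ j, A j) (i : N)
    (v : (∀ j, A j) → ℝ) :
    (∀ x : A i, v (Function.update a i x) ≤ v a + ε) ↔
      ∀ p ∈ unilateralDeviations a i, v p ≤ v a + ε := by
  refine ⟨fun h p hp => ?_, fun h x => ?_⟩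
  · obtain ⟨x, -, rfl⟩ := Finset.mem_image.1 (Finset.mem_of_mem_erase hp)
    exact h x
  · by_cases hx : Function.update a i x = a
    · rw [hx]
      linarith
    · exact h _ (Finset.mem_erase.2 ⟨hx, Finset.mem_image_of_mem _ (Finset.mem_univ x)⟩)

lemma measurableSet_setOf_forall_update_le_add [∀ i, Countable (A i)] (ε : ℝ) (a : ∀ j, A j)
    (i : N) :
    MeasurableSet {v : (∀ j, A j) → ℝ | ∀ x : A i, v (Function.update a i x) ≤ v a + ε} := by
  rw [Set.ofPred_forall]
  exact .iInter fun x => measurableSet_le (by fun_prop) (by fun_prop)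

lemma setOf_isPureEquilibrium_eq_pi (ε : ℝ) (a : ∀ j, A j) :
    {u : N → (∀ j, A j) → ℝ | ∀ (i : N) (x : A i), u i (Function.update a i x) ≤ u i a + ε}
      = Set.univ.pi fun i => {v | ∀ x : A i, v (Function.update a i x) ≤ v a + ε} := by
  ext
  simp

variable [Fintype N] [∀ i, Fintype (A i)]

lemma measure_pi_setOf_forall_update_le_add (μ : Measure ℝ) [IsProbabilityMeasure μ] {ε : ℝ}
    (hε : 0 ≤ ε) (a : ∀ j, A j) (i : N) :
    Measure.pi (fun _ : ∀ j, A j => μ)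
        {v | ∀ x : A i, v (Function.update a i x) ≤ v a + ε}
      = ∫⁻ t, μ (Set.Iic (t + ε)) ^ (Fintype.card (A i) - 1) ∂μ := by
  simp_rw [forall_update_le_add_iff hε a i, ← card_unilateralDeviations a i]
  exact measure_pi_setOf_forall_le_add μ ε a _ (by simp [unilateralDeviations])

lemma measureReal_pi_setOf_isPureEquilibrium (μ : Measure ℝ) [IsProbabilityMeasure μ] {ε : ℝ}
    (hε : 0 ≤ ε) (a : ∀ j, A j) :
    (Measure.pi fun _ : N => Measure.pi fun _ : ∀ j, A j => μ).real
        {u | ∀ (i : N) (x : A i), u i (Function.update a i x) ≤ u i a + ε}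
      = ∏ i, qEps μ ε (Fintype.card (A i)) := by
  simp_rw [setOf_isPureEquilibrium_eq_pi, measureReal_def, Measure.pi_pi, ENNReal.toReal_prod,
    measure_pi_setOf_forall_update_le_add μ hε, toReal_lintegral_measure_Iic_add_pow]

end PureEquilibrium

theorem stmt_9_general (μ : Measure ℝ) [IsProbabilityMeasure μ]
    (ε : ℝ) (hε : 0 ≤ ε)
    (N : Type) [Fintype N] [DecidableEq N]
    (A : N → Type) [∀ i, Fintype (A i)] :
    ∫ u : N → (∀ j, A j) → ℝ,
      (∑ a : ∀ j, A j,
        if (∀ (i : N) (x : A i), u i (Function.update a i x) ≤ u i a + ε)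
        then (1 : ℝ) else 0)
      ∂(Measure.pi (fun _ : N => Measure.pi (fun _ : ∀ j, A j => μ)))
      = ∏ i : N, (Fintype.card (A i) : ℝ) * qEps μ ε (Fintype.card (A i)) := by
  have hmeas (a : ∀ j, A j) : MeasurableSet
      {u : N → (∀ j, A j) → ℝ | ∀ (i : N) (x : A i), u i (Function.update a i x) ≤ u i a + ε} := by
    rw [setOf_isPureEquilibrium_eq_pi]
    exact .univ_pi fun i => measurableSet_setOf_forall_update_le_add ε a i
  rw [integral_finsetSum _ fun a _ => by
    rw [ite_one_zero_eq_indicator]; exact (integrable_const 1).indicator (hmeas a)]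
  simp_rw [ite_one_zero_eq_indicator, integral_indicator_one (hmeas _),
    measureReal_pi_setOf_isPureEquilibrium μ hε]
  rw [Finset.sum_const, Finset.card_univ, Fintype.card_pi, nsmul_eq_mul, Nat.cast_prod,
    Finset.prod_mul_distrib]

/-- With all utilities i.i.d. with continuous CDF, the expected number of pure
ε-equilibria equals `∏_i |A_i| q_i(ε)`. -/
theorem stmt_9 (μ : Measure ℝ) [IsProbabilityMeasure μ] [NullSingletonClass μ]
    (ε : ℝ) (hε : 0 ≤ ε)
    (N : Type) [Fintype N] [DecidableEq N] [Nonempty N]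
    (A : N → Type) [∀ i, Fintype (A i)] (hA : ∀ i, 2 ≤ Fintype.card (A i)) :
    ∫ u : N → (∀ j, A j) → ℝ,
      (∑ a : ∀ j, A j,
        if (∀ (i : N) (x : A i), u i (Function.update a i x) ≤ u i a + ε)
        then (1 : ℝ) else 0)
      ∂(Measure.pi (fun _ : N => Measure.pi (fun _ : ∀ j, A j => μ)))
      = ∏ i : N, (Fintype.card (A i) : ℝ) * qEps μ ε (Fintype.card (A i)) :=
  stmt_9_general μ ε hε N A
end

section
/- Consider a game with agents N, action sets A_i, and i.i.d. continuous utilities. Fix an agent i and two distinct action profiles a, a' differing only in agent i's action. Then the indicator events {a is a pure ε-equilibrium} and {a' is a pure ε-equilibrium} satisfy E[1_a · 1_{a'}] ≤ |A_i| · ∏_{j∈N} q_j(ε)^2, where q_j(ε) = ∫ F(x+ε)^{|A_j|−1} dF(x). -/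
/-!
Under the product measure the event factors over agents, since agent `j`'s condition only
involves the utility vector `u j`. For `j ≠ i`, the conditions at `a` and at `a' = a[i ↦ b]`
compare `u j a` with its `j`-deviations and `u j a'` with its own; all profiles of the first
star have `i`-th action `a i` and all of the second have `b`, so the two stars are disjoint and
independent, giving `q_j²`. The chance that one coordinate is within `ε` of `m` i.i.d. others is
`∫ F(x + ε)^m dμ`, by integrating out the others with the pivot fixed. For agent `i` only the
condition at `a` is kept, giving `q_i`, and `q_i ≤ |A_i| q_i²` because `|A_i| q_i ≥ 1`: some
coordinate is always the maximum, so a union bound over the pivot covers the whole space.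
-/

open MeasureTheory

open ProbabilityTheory Set Function
open scoped ENNReal

noncomputable def qLIntegral (μ : Measure ℝ) (ε : ℝ) (m : ℕ) : ℝ≥0∞ :=
  ∫⁻ x, μ (Iic (x + ε)) ^ m ∂μ

lemma qLIntegral_le_one (μ : Measure ℝ) [IsProbabilityMeasure μ] (ε : ℝ) (m : ℕ) :
    qLIntegral μ ε m ≤ 1 :=
  (lintegral_mono fun _ => pow_le_one₀ zero_le prob_le_one).trans_eq (by simp)

lemma qEps_eq_toReal_qLIntegral (μ : Measure ℝ) [IsProbabilityMeasure μ] (ε : ℝ) (k : ℕ) :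
    qEps μ ε k = (qLIntegral μ ε (k - 1)).toReal := by
  have hF : Measurable fun x : ℝ => μ (Iic (x + ε)) :=
    Monotone.measurable fun x y hxy => measure_mono (Iic_subset_Iic.2 (by linarith))
  simp only [qEps, qLIntegral, ← ENNReal.toReal_pow]
  exact integral_toReal (hF.pow_const _).aemeasurable
    (ae_of_all _ fun x => ENNReal.pow_lt_top (measure_lt_top μ _))

lemma measure_pi_restrict_preimage_inter {ι Ω : Type*} [Fintype ι] [MeasurableSpace Ω]
    (μ : Measure Ω) [IsProbabilityMeasure μ] {S T : Finset ι} (hST : Disjoint S T)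
    {E : Set (S → Ω)} {F : Set (T → Ω)} (hE : MeasurableSet E) (hF : MeasurableSet F) :
    Measure.pi (fun _ => μ) (S.restrict ⁻¹' E ∩ T.restrict ⁻¹' F)
      = Measure.pi (fun _ => μ) (S.restrict ⁻¹' E) * Measure.pi (fun _ => μ) (T.restrict ⁻¹' F) :=
  ((iIndepFun_pi (μ := fun _ => μ) (X := fun _ => id) fun _ => aemeasurable_id).indepFun_finset
    S T hST fun i => measurable_pi_apply i).measure_inter_preimage_eq_mul E F hE hF

section NearMax

variable {ι : Type*}

def nearMaxSet (ε : ℝ) (s : Finset ι) (c : ι) : Set (ι → ℝ) :=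
  {v | ∀ p ∈ s, v p ≤ v c + ε}

lemma nearMaxSet_eq_restrict_preimage [DecidableEq ι] (ε : ℝ) (s : Finset ι) (c : ι) :
    nearMaxSet ε s c = (insert c s).restrict ⁻¹'
      {w | ∀ p (hp : p ∈ s), w ⟨p, Finset.mem_insert_of_mem hp⟩
        ≤ w ⟨c, Finset.mem_insert_self c s⟩ + ε} :=
  rfl

variable [Fintype ι]

lemma measurableSet_nearMaxSet (ε : ℝ) (s : Finset ι) (c : ι) :
    MeasurableSet (nearMaxSet ε s c) := by
  simp only [nearMaxSet, ofPred_forall]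
  exact .iInter fun p => .iInter fun _ => measurableSet_le (measurable_pi_apply p) (by fun_prop)

variable [DecidableEq ι] (μ : Measure ℝ) [IsProbabilityMeasure μ] (ε : ℝ)

lemma lmarginal_indicator_nearMaxSet {s : Finset ι} {c : ι} (hc : c ∉ s) (x : ι → ℝ) :
    (∫⋯∫⁻_Finset.univ.erase c, (nearMaxSet ε s c).indicator 1 ∂fun _ => μ) x
      = μ (Iic (x c + ε)) ^ s.card := by
  set R := Finset.univ.erase c
  have hsR : s ⊆ R := fun p hp => Finset.mem_erase.2 ⟨fun h => hc (h ▸ hp), Finset.mem_univ p⟩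
  -- with the pivot coordinate `c` frozen, the section of `nearMaxSet` is a box
  set B : R → Set ℝ := fun p => if (p : ι) ∈ s then Iic (x c + ε) else univ
  have hslice : (updateFinset x R) ⁻¹' nearMaxSet ε s c = univ.pi B := by
    ext y
    have hxc : updateFinset x R y c = x c := by simp [updateFinset, R]
    simp only [nearMaxSet, mem_preimage, mem_ofPred_eq, mem_pi, mem_univ, true_implies, B, hxc]
    refine ⟨fun h p => ?_, fun h p hp => ?_⟩
    · split_ifs with hp
      · simpa [updateFinset] using h p hp
      · trivial
    · simpa [updateFinset, hsR hp, hp] using h ⟨p, hsR hp⟩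
  have hB : ∀ p, MeasurableSet (B p) := fun p => by
    simp only [B]; split_ifs <;> simp [measurableSet_Iic]
  simp only [lmarginal]
  simp_rw [← indicator_comp_right (updateFinset x R), hslice, Pi.one_comp]
  rw [lintegral_indicator_one (.univ_pi hB), Measure.pi_pi,
    Finset.prod_coe_sort R (fun p => μ (if p ∈ s then Iic (x c + ε) else univ))]
  simp only [apply_ite μ, measure_univ]
  rw [Finset.prod_ite_mem, Finset.inter_eq_right.2 hsR, Finset.prod_const]

lemma measure_nearMaxSet {s : Finset ι} {c : ι} (hc : c ∉ s) :
    Measure.pi (fun _ => μ) (nearMaxSet ε s c) = qLIntegral μ ε s.card := by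
  rw [← lintegral_indicator_one (measurableSet_nearMaxSet ε s c),
    lintegral_eq_lmarginal_univ (fun _ => 0), ← Finset.insert_erase (Finset.mem_univ c),
    lmarginal_insert _ (measurable_one.indicator (measurableSet_nearMaxSet ε s c))
      (Finset.notMem_erase c _)]
  simp only [lmarginal_indicator_nearMaxSet μ ε hc, update_self]
  rfl

lemma measure_nearMaxSet_inter {s t : Finset ι} {c d : ι} (hc : c ∉ s) (hd : d ∉ t)
    (hdisj : Disjoint (insert c s) (insert d t)) :
    Measure.pi (fun _ => μ) (nearMaxSet ε s c ∩ nearMaxSet ε t d)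
      = qLIntegral μ ε s.card * qLIntegral μ ε t.card := by
  rw [← measure_nearMaxSet μ ε hc, ← measure_nearMaxSet μ ε hd,
    nearMaxSet_eq_restrict_preimage, nearMaxSet_eq_restrict_preimage]
  refine measure_pi_restrict_preimage_inter μ hdisj ?_ ?_ <;>
  · simp only [ofPred_forall]
    exact .iInter fun p => .iInter fun _ => measurableSet_le (by fun_prop) (by fun_prop)

lemma one_le_card_mul_qLIntegral [Nonempty ι] (hε : 0 ≤ ε) :
    1 ≤ Fintype.card ι * qLIntegral μ ε (Fintype.card ι - 1) := by
  have hcover : univ ⊆ ⋃ c : ι, nearMaxSet ε (Finset.univ.erase c) c := by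
    intro v _
    obtain ⟨c, hc⟩ := Finite.exists_max v
    exact mem_iUnion.2 ⟨c, fun p _ => (hc p).trans (le_add_of_nonneg_right hε)⟩
  calc 1 = Measure.pi (fun _ : ι => μ) univ := measure_univ.symm
    _ ≤ ∑ c : ι, Measure.pi (fun _ => μ) (nearMaxSet ε (Finset.univ.erase c) c) :=
      (measure_mono hcover).trans (measure_iUnion_fintype_le _ _)
    _ = Fintype.card ι * qLIntegral μ ε (Fintype.card ι - 1) := by
      simp [measure_nearMaxSet μ ε (Finset.notMem_erase _ _), Finset.card_erase_of_mem]

end NearMax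

section Game

variable {N : Type*} [Fintype N] [DecidableEq N] {A : N → Type*} [∀ j, Fintype (A j)]
  [∀ j, DecidableEq (A j)]

def deviations (a : ∀ j, A j) (j : N) : Finset (∀ j, A j) :=
  (Finset.univ.erase (a j)).image (update a j)

def noProfitableDeviation (ε : ℝ) (a : ∀ j, A j) (j : N) : Set ((∀ j, A j) → ℝ) :=
  {v | ∀ x : A j, v (update a j x) ≤ v a + ε}

lemma card_deviations (a : ∀ j, A j) (j : N) :
    (deviations a j).card = Fintype.card (A j) - 1 := by
  rw [deviations, Finset.card_image_of_injective _ (update_injective a j),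
    Finset.card_erase_of_mem (Finset.mem_univ _), Finset.card_univ]

lemma self_notMem_deviations (a : ∀ j, A j) (j : N) : a ∉ deviations a j := by
  simp [deviations]

lemma apply_eq_of_mem_insert_deviations {a : ∀ j, A j} {i j : N} (hij : i ≠ j) {p : ∀ j, A j}
    (hp : p ∈ insert a (deviations a j)) : p i = a i := by
  simp only [deviations, Finset.mem_insert, Finset.mem_image] at hp
  rcases hp with rfl | ⟨x, -, rfl⟩
  · rfl
  · exact update_of_ne hij x a

lemma disjoint_insert_deviations {a : ∀ j, A j} {i j : N} (hij : i ≠ j) {b : A i} (hb : b ≠ a i) :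
    Disjoint (insert a (deviations a j))
      (insert (update a i b) (deviations (update a i b) j)) :=
  Finset.disjoint_left.2 fun p hp hp' => hb <| by
    rw [← update_self i b a, ← apply_eq_of_mem_insert_deviations hij hp',
      apply_eq_of_mem_insert_deviations hij hp]

lemma noProfitableDeviation_subset_nearMaxSet (ε : ℝ) (a : ∀ j, A j) (j : N) :
    noProfitableDeviation ε a j ⊆ nearMaxSet ε (deviations a j) a := by
  rintro v hv p hp
  obtain ⟨x, -, rfl⟩ := Finset.mem_image.1 hp
  exact hv x

variable (μ : Measure ℝ) [IsProbabilityMeasure μ] {ε : ℝ}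

lemma measure_noProfitableDeviation_le (a : ∀ j, A j) (j : N) :
    Measure.pi (fun _ => μ) (noProfitableDeviation ε a j)
      ≤ qLIntegral μ ε (Fintype.card (A j) - 1) := by
  rw [← card_deviations a j, ← measure_nearMaxSet μ ε (self_notMem_deviations a j)]
  exact measure_mono (noProfitableDeviation_subset_nearMaxSet ε a j)

lemma measure_noProfitableDeviation_inter_le {a : ∀ j, A j} {i j : N} (hij : i ≠ j) {b : A i}
    (hb : b ≠ a i) :
    Measure.pi (fun _ => μ)
        (noProfitableDeviation ε a j ∩ noProfitableDeviation ε (update a i b) j)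
      ≤ qLIntegral μ ε (Fintype.card (A j) - 1) ^ 2 := by
  refine (measure_mono (inter_subset_inter (noProfitableDeviation_subset_nearMaxSet ε _ _)
    (noProfitableDeviation_subset_nearMaxSet ε _ _))).trans_eq ?_
  rw [measure_nearMaxSet_inter μ ε (self_notMem_deviations _ _) (self_notMem_deviations _ _)
      (disjoint_insert_deviations hij hb), card_deviations, card_deviations, sq]

theorem measure_pi_noProfitableDeviation_inter_le (hε : 0 ≤ ε) (a : ∀ j, A j) {i : N} {b : A i}
    (hb : b ≠ a i) :
    Measure.pi (fun _ : N => Measure.pi fun _ : (∀ j, A j) => μ)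
        (univ.pi fun j => noProfitableDeviation ε a j ∩ noProfitableDeviation ε (update a i b) j)
      ≤ Fintype.card (A i) * ∏ j, qLIntegral μ ε (Fintype.card (A j) - 1) ^ 2 := by
  have : Nonempty (A i) := ⟨b⟩
  rw [Measure.pi_pi, ← Finset.mul_prod_erase _ _ (Finset.mem_univ i),
    ← Finset.mul_prod_erase _ _ (Finset.mem_univ i), ← mul_assoc]
  gcongr with j hj
  · calc _ ≤ qLIntegral μ ε (Fintype.card (A i) - 1) :=
          (measure_mono inter_subset_left).trans (measure_noProfitableDeviation_le μ a i)
      _ ≤ (Fintype.card (A i) * qLIntegral μ ε (Fintype.card (A i) - 1))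
            * qLIntegral μ ε (Fintype.card (A i) - 1) :=
          le_mul_of_one_le_left zero_le (one_le_card_mul_qLIntegral μ ε hε)
      _ = _ := by ring
  · exact measure_noProfitableDeviation_inter_le μ (Finset.ne_of_mem_erase hj).symm hb

end Game

theorem stmt_16_general (μ : Measure ℝ) [IsProbabilityMeasure μ]
    (ε : ℝ) (hε : 0 ≤ ε)
    (N : Type) [Fintype N] [DecidableEq N]
    (A : N → Type) [∀ i, Fintype (A i)]
    (a : ∀ j, A j) (i : N) (b : A i) (hb : b ≠ a i) :
    ((Measure.pi (fun _ : N => Measure.pi (fun _ : ∀ j, A j => μ)))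
      ({u : N → (∀ j, A j) → ℝ |
          ∀ (j : N) (x : A j), u j (Function.update a j x) ≤ u j a + ε} ∩
       {u : N → (∀ j, A j) → ℝ |
          ∀ (j : N) (x : A j),
            u j (Function.update (Function.update a i b) j x)
              ≤ u j (Function.update a i b) + ε})).toReal
      ≤ (Fintype.card (A i) : ℝ) * ∏ j : N, (qEps μ ε (Fintype.card (A j))) ^ 2 := by
  classical
  have hpi (w : ∀ j, A j) : {u : N → (∀ j, A j) → ℝ | ∀ j x, u j (update w j x) ≤ u j w + ε}
      = univ.pi fun j => noProfitableDeviation ε w j := by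
    ext u; simp [noProfitableDeviation]
  rw [hpi, hpi, ← pi_inter_distrib]
  have hfinite : (Fintype.card (A i) : ℝ≥0∞) * ∏ j, qLIntegral μ ε (Fintype.card (A j) - 1) ^ 2
      ≠ ⊤ :=
    ENNReal.mul_ne_top (ENNReal.natCast_ne_top _) <| ENNReal.prod_ne_top fun j _ =>
      ENNReal.pow_ne_top <| ne_top_of_le_ne_top ENNReal.one_ne_top (qLIntegral_le_one μ ε _)
  refine (ENNReal.toReal_mono hfinite
    (measure_pi_noProfitableDeviation_inter_le μ hε a hb)).trans_eq ?_
  simp [ENNReal.toReal_prod, qEps_eq_toReal_qLIntegral]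

/-- For two distinct action profiles `a` and `a' = (b, a_{−i})` differing only
in agent `i`'s action, the probability that both are pure ε-equilibria is at
most `|A_i| · ∏_j q_j(ε)^2`. -/
theorem stmt_16 (μ : Measure ℝ) [IsProbabilityMeasure μ] [NullSingletonClass μ]
    (ε : ℝ) (hε : 0 ≤ ε)
    (N : Type) [Fintype N] [DecidableEq N] [Nonempty N]
    (A : N → Type) [∀ i, Fintype (A i)] (hA : ∀ j, 2 ≤ Fintype.card (A j))
    (a : ∀ j, A j) (i : N) (b : A i) (hb : b ≠ a i) :
    ((Measure.pi (fun _ : N => Measure.pi (fun _ : ∀ j, A j => μ)))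
      ({u : N → (∀ j, A j) → ℝ |
          ∀ (j : N) (x : A j), u j (Function.update a j x) ≤ u j a + ε} ∩
       {u : N → (∀ j, A j) → ℝ |
          ∀ (j : N) (x : A j),
            u j (Function.update (Function.update a i b) j x)
              ≤ u j (Function.update a i b) + ε})).toReal
      ≤ (Fintype.card (A i) : ℝ) * ∏ j : N, (qEps μ ε (Fintype.card (A j))) ^ 2 :=
  stmt_16_general μ ε hε N A a i b hb
end
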